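/- Every vertex (a,b) ∈ L×L has degree at most 6 in the graph Γ_3 = (I,E): the number of edges of E containing (a,b) is at most 6. -/
import Mathlib


/-- The vertex `j(i,l)`: `⌊(i+l)/2⌋` if `{i,l} = {d-1,d}`, else `⌈(i+l)/2⌉ + δ_{i,l}`. -/
noncomputable def jf (d i l : ℤ) : ℤ :=
  if ({i, l} : Finset ℤ) = ({d - 1, d} : Finset ℤ) then ⌊(i + l : ℚ) / 2⌋
  else ⌈(i + l : ℚ) / 2⌉ + (if i = l then 1 else 0)

/-- The (unordered) edge of `Γ₃` associated to `(i,l) ∈ J`, as a finite set of vertices. -/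
noncomputable def edgeOf (d i l : ℤ) : Finset (ℤ × ℤ) :=
  {(i, jf d i l), (jf d i l, l)}

lemma jf_comm (d i l : ℤ) : jf d i l = jf d l i := by
  unfold jf
  have h1 : ({l, i} : Finset ℤ) = {i, l} := Finset.pair_comm l i
  have h2 : (l : ℚ) + i = (i : ℚ) + l := add_comm _ _
  rw [h1, h2]
  by_cases h : i = l
  · simp [h]
  · simp [h, Ne.symm h]

lemma caseA (d a b l : ℤ) (h : b = jf d a l) :
    l = 2*b - a - 1 ∨ l = 2*b - a ∨
      l = (if b = d - 1 ∧ (a = d - 1 ∨ a = d) then 2*d - 1 - a else a) := by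
  unfold jf at h
  by_cases hs : ({a, l} : Finset ℤ) = ({d - 1, d} : Finset ℤ)
  · rw [if_pos hs] at h
    have had : a = d - 1 ∨ a = d := by
      have : a ∈ ({d - 1, d} : Finset ℤ) := hs ▸ Finset.mem_insert_self a {l}
      simpa using this
    have hd1 : (d - 1 : ℤ) = a ∨ (d - 1 : ℤ) = l := by
      have : (d - 1 : ℤ) ∈ ({a, l} : Finset ℤ) := by rw [hs]; simp
      simpa using this
    have hd2 : (d : ℤ) = a ∨ (d : ℤ) = l := by
      have : (d : ℤ) ∈ ({a, l} : Finset ℤ) := by rw [hs]; simp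
      simpa using this
    have hsum : a + l = 2*d - 1 := by omega
    have hfl : ⌊((a : ℚ) + l) / 2⌋ = d - 1 := by
      have hq : ((a : ℚ) + l) = 2 * (d : ℚ) - 1 := by exact_mod_cast congrArg (Int.cast : ℤ → ℚ) hsum
      rw [Int.floor_eq_iff]
      constructor <;> push_cast <;> linarith
    have hb : b = d - 1 := by rw [h, hfl]
    right; right
    rw [if_pos ⟨hb, had⟩]
    omega
  · rw [if_neg hs] at h
    by_cases hl : a = l
    · have hceil : ⌈((a : ℚ) + l) / 2⌉ = a := by
        rw [← hl]
        have : ((a : ℚ) + a) / 2 = (a : ℚ) := by ring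
        rw [this, Int.ceil_intCast]
      rw [if_pos hl, hceil] at h
      right; right
      split_ifs with hc
      · omega
      · omega
    · rw [if_neg hl, add_zero] at h
      have h' : ⌈((a : ℚ) + l) / 2⌉ = b := h.symm
      rw [Int.ceil_eq_iff] at h'
      obtain ⟨h1, h2⟩ := h'
      have e1 : ((2*b - 2 : ℤ) : ℚ) < ((a + l : ℤ) : ℚ) := by push_cast; linarith
      have e2 : ((a + l : ℤ) : ℚ) ≤ ((2*b : ℤ) : ℚ) := by push_cast; linarith
      have e1' : (2*b - 2 : ℤ) < a + l := by exact_mod_cast e1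
      have e2' : (a + l : ℤ) ≤ 2*b := by exact_mod_cast e2
      omega

open Classical in
theorem stmt11 (d a b : ℤ) (hd : 3 ≤ d)
    (ha : 1 ≤ a ∧ a ≤ d) (hb : 1 ≤ b ∧ b ≤ d) :
    (((((Finset.Icc (1 : ℤ) d) ×ˢ (Finset.Icc (1 : ℤ) d)).erase (d, d)).image
        (fun p => edgeOf d p.1 p.2)).filter (fun e => (a, b) ∈ e)).card ≤ 6 := by
  classical
  set X : ℤ := if b = d - 1 ∧ (a = d - 1 ∨ a = d) then 2*d - 1 - a else a with hX
  set Y : ℤ := if a = d - 1 ∧ (b = d - 1 ∨ b = d) then 2*d - 1 - b else b with hY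
  have hsub : (((((Finset.Icc (1 : ℤ) d) ×ˢ (Finset.Icc (1 : ℤ) d)).erase (d, d)).image
        (fun p => edgeOf d p.1 p.2)).filter (fun e => (a, b) ∈ e)) ⊆
      ({edgeOf d a (2*b - a - 1), edgeOf d a (2*b - a), edgeOf d a X,
        edgeOf d (2*a - b - 1) b, edgeOf d (2*a - b) b, edgeOf d Y b} :
        Finset (Finset (ℤ × ℤ))) := by
    intro e he
    simp only [Finset.mem_filter, Finset.mem_image] at he
    obtain ⟨⟨⟨i, l⟩, _, rfl⟩, hab⟩ := he
    simp only [edgeOf, Finset.mem_insert, Finset.mem_singleton, Prod.mk.injEq] at hab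
    rcases hab with ⟨rfl, hb'⟩ | ⟨ha', rfl⟩
    · rcases caseA d a b l hb' with h | h | h
      · subst h; simp
      · subst h; simp
      · rw [← hX] at h; subst h; simp
    · have ha'' : a = jf d b i := by rw [jf_comm]; exact ha'
      rcases caseA d b a i ha'' with h | h | h
      · subst h; simp
      · subst h; simp
      · rw [← hY] at h; subst h; simp
  have step : ∀ (x : Finset (ℤ × ℤ)) (s : Finset (Finset (ℤ × ℤ))) (n : ℕ),
      s.card ≤ n → (insert x s).card ≤ n + 1 := by
    intro x s n h
    exact (Finset.card_insert_le _ _).trans (by omega)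
  exact (Finset.card_le_card hsub).trans
    (step _ _ _ (step _ _ _ (step _ _ _ (step _ _ _ (step _ _ _ (by simp))))))
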